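/- arXiv:2201.08207 — 4 statements merged into one kernel-verified Lean document; each statement's English description precedes it below -/
import Mathlib

section
/- Let G be a d-regular finite simple undirected graph on n vertices (d ≥ 1), let S be a set of k vertices, and let η solve the McAvoy–Allen system for S. Then (1/(2d²n²)) · Σ_{u,v ∈ V} |N(u) ∩ N(v)| · η(u,v) = k(n−k)/(2n) − a(S)/(2dn), where a(S) is the number of active edges induced by S. -/
open Finset

variable {V : Type*}

/-- Number of active edges: edges with exactly one endpoint in `S`. -/
def activeCount [Fintype V] [DecidableEq V] (G : SimpleGraph V) [DecidableRel G.Adj]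
    (S : Finset V) : ℕ :=
  (G.edgeFinset.filter (fun e =>
    Sym2.lift ⟨fun u v => xor (decide (u ∈ S)) (decide (v ∈ S)),
      fun u v => Bool.xor_comm _ _⟩ e = true)).card

/-- `η` solves the McAvoy–Allen system for `S` on a `d`-regular graph `G`. -/
def MASolves [Fintype V] [DecidableEq V] (G : SimpleGraph V) [DecidableRel G.Adj]
    (d : ℕ) (S : Finset V) (η : V → V → ℝ) : Prop :=
  (∀ u, η u u = 0) ∧
  ∀ u v, u ≠ v →
    η u v = ((Fintype.card V : ℝ) / 2) *
        |(if u ∈ S then (1 : ℝ) else 0) - (if v ∈ S then (1 : ℝ) else 0)|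
      + (1 / (2 * (d : ℝ))) *
        ((∑ w ∈ G.neighborFinset u, η w v) + (∑ w ∈ G.neighborFinset v, η u w))

/-- The subgraph of active edges. -/
def activeGraph [DecidableEq V] (G : SimpleGraph V) (S : Finset V) : SimpleGraph V where
  Adj a b := G.Adj a b ∧ ¬((a ∈ S) ↔ (b ∈ S))
  symm := ⟨fun a b h => ⟨h.1.symm, fun hi => h.2 hi.symm⟩⟩
  loopless := ⟨fun a h => h.2 Iff.rfl⟩

instance [DecidableEq V] (G : SimpleGraph V) [DecidableRel G.Adj] (S : Finset V) :
    DecidableRel (activeGraph G S).Adj := fun _ _ => instDecidableAnd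

private lemma sum_swap23 [Fintype V] (f : V → V → V → ℝ) :
    ∑ u : V, ∑ v : V, ∑ w : V, f u v w = ∑ u : V, ∑ w : V, ∑ v : V, f u v w :=
  Finset.sum_congr rfl fun _ _ => Finset.sum_comm

private lemma sum_rot [Fintype V] (f : V → V → V → ℝ) :
    ∑ u : V, ∑ v : V, ∑ w : V, f u v w = ∑ w : V, ∑ v : V, ∑ u : V, f u v w := by
  rw [sum_swap23 f, Finset.sum_comm]
  exact Finset.sum_congr rfl fun _ _ => Finset.sum_comm

private lemma nsum [Fintype V] (G : SimpleGraph V) [DecidableRel G.Adj] (u : V) (f : V → ℝ) :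
    ∑ w ∈ G.neighborFinset u, f w = ∑ w : V, (if G.Adj u w then (1:ℝ) else 0) * f w := by
  rw [SimpleGraph.neighborFinset_eq_filter, Finset.sum_filter]
  exact Finset.sum_congr rfl (by intros; split <;> simp)

private lemma pull_const [Fintype V] (c : ℝ) (f : V → V → ℝ) :
    ∑ u : V, ∑ v : V, c * f u v = c * ∑ u : V, ∑ v : V, f u v := by
  simp [Finset.mul_sum]

private lemma split_sub [Fintype V] (f g : V → V → ℝ) :
    ∑ u : V, ∑ v : V, (f u v - g u v)
      = (∑ u : V, ∑ v : V, f u v) - ∑ u : V, ∑ v : V, g u v := by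
  simp [Finset.sum_sub_distrib]

lemma activeGraph_adj [DecidableEq V] (G : SimpleGraph V) (S : Finset V) (a b : V) :
    (activeGraph G S).Adj a b ↔ G.Adj a b ∧ ¬((a ∈ S) ↔ (b ∈ S)) := Iff.rfl

private lemma split2 [Fintype V] (f g : V → V → ℝ) :
    ∑ u : V, ∑ v : V, (f u v + g u v)
      = (∑ u : V, ∑ v : V, f u v) + ∑ u : V, ∑ v : V, g u v := by
  simp [Finset.sum_add_distrib]

theorem weak_selection_constant_formula [Fintype V] [DecidableEq V]
    (G : SimpleGraph V) [DecidableRel G.Adj]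
    (d k : ℕ) (hd : 1 ≤ d) (hreg : G.IsRegularOfDegree d)
    (S : Finset V) (hk : S.card = k) (η : V → V → ℝ) (hη : MASolves G d S η) :
    (1 / (2 * (d : ℝ) ^ 2 * (Fintype.card V : ℝ) ^ 2)) *
      ∑ u : V, ∑ v : V, ((G.neighborFinset u ∩ G.neighborFinset v).card : ℝ) * η u v
    = ((k : ℝ) * ((Fintype.card V : ℝ) - (k : ℝ))) / (2 * (Fintype.card V : ℝ))
      - (activeCount G S : ℝ) / (2 * (d : ℝ) * (Fintype.card V : ℝ)) := by
  classical
  rcases Nat.eq_zero_or_pos (Fintype.card V) with hn0 | hnpos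
  · have hemp : IsEmpty V := Fintype.card_eq_zero_iff.mp hn0
    have hk0 : k = 0 := by
      rw [← hk]
      simp [Finset.card_eq_zero, Finset.eq_empty_of_isEmpty]
    simp [hn0, hk0]
  set n : ℝ := (Fintype.card V : ℝ) with hn
  have hnne : n ≠ 0 := Nat.cast_ne_zero.mpr hnpos.ne'
  set dr : ℝ := (d : ℝ) with hdr
  have hdne : dr ≠ 0 := Nat.cast_ne_zero.mpr (by omega)
  set x : V → ℝ := fun u => if u ∈ S then (1 : ℝ) else 0 with hxdef
  set e : V → V → ℝ := fun a b => if G.Adj a b then (1 : ℝ) else 0 with hedef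
  have he_symm : ∀ a b, e a b = e b a := by
    intro a b; simp only [hedef, G.adj_comm]
  have hdeg : ∀ u : V, ∑ v : V, e u v = dr := by
    intro u
    simp only [hedef]
    rw [Finset.sum_boole, ← SimpleGraph.neighborFinset_eq_filter, ← SimpleGraph.degree, hreg u]
  have hdeg' : ∀ u : V, ∑ v : V, e v u = dr := by
    intro u
    rw [← hdeg u]
    exact Finset.sum_congr rfl fun v _ => he_symm v u
  set E : ℝ := ∑ u : V, ∑ v : V, η u v with hE
  set D : ℝ := ∑ u : V, ∑ v : V, e u v * η u v with hD
  set A : ℝ := ∑ u : V, ∑ v : V, e u v * |x u - x v| with hA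
  set B : ℝ := ∑ u : V, ∑ v : V, |x u - x v| with hB
  set F : ℝ := ∑ u : V, ∑ v : V, ((G.neighborFinset u ∩ G.neighborFinset v).card : ℝ) * η u v
    with hF
  -- expand F as a triple sum
  have hcard : ∀ u v : V, ((G.neighborFinset u ∩ G.neighborFinset v).card : ℝ)
      = ∑ w : V, e u w * e v w := by
    intro u v
    have h1 : ∀ w : V, e u w * e v w
        = if w ∈ G.neighborFinset u ∩ G.neighborFinset v then (1:ℝ) else 0 := by
      intro w
      by_cases h1 : G.Adj u w <;> by_cases h2 : G.Adj v w <;>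
        simp [hedef, h1, h2, Finset.mem_inter, SimpleGraph.mem_neighborFinset]
    rw [Finset.sum_congr rfl fun w _ => h1 w, Finset.sum_boole]
    congr 2
    ext w
    simp
  have hF3 : F = ∑ u : V, ∑ v : V, ∑ w : V, (e u w * e v w) * η u v := by
    rw [hF]
    refine Finset.sum_congr rfl fun u _ => Finset.sum_congr rfl fun v _ => ?_
    rw [hcard, Finset.sum_mul]
  -- two triple sums equal to F
  have hK1 : ∑ u : V, ∑ v : V, ∑ w : V, e u v * (e u w * η w v) = F := by
    rw [hF3, sum_rot fun u v w => (e u w * e v w) * η u v]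
    refine Finset.sum_congr rfl fun a _ => Finset.sum_congr rfl fun b _ =>
      Finset.sum_congr rfl fun c _ => ?_
    simp only [hedef, G.adj_comm c a, G.adj_comm b a]
    ring
  have hK2 : ∑ u : V, ∑ v : V, ∑ w : V, e u v * (e v w * η u w) = F := by
    rw [hF3, sum_swap23 fun u v w => (e u w * e v w) * η u v]
    refine Finset.sum_congr rfl fun a _ => Finset.sum_congr rfl fun b _ =>
      Finset.sum_congr rfl fun c _ => ?_
    simp only [hedef, G.adj_comm c b]
    ring
  -- recurrence termwise, over adjacent pairs
  have key : ∀ u v : V, e u v * η u v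
      = (n / 2) * (e u v * |x u - x v|)
        + (1 / (2 * dr)) * ((∑ w : V, e u v * (e u w * η w v))
            + (∑ w : V, e u v * (e v w * η u w))) := by
    intro u v
    simp only [hn, hdr, hxdef, hedef]
    by_cases h : G.Adj u v
    · rw [hη.2 u v (G.ne_of_adj h), nsum G u (fun w => η w v), nsum G v (fun w => η u w)]
      simp [h, div_eq_mul_inv, mul_comm, mul_left_comm]
    · simp [h]
  have hDexp : D = (n / 2) * A + (1 / (2 * dr)) * (F + F) := by
    rw [hD, Finset.sum_congr rfl fun u _ => Finset.sum_congr rfl fun v _ => key u v,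
      split2, pull_const, pull_const, ← hA,
      split2 (fun u v => ∑ w : V, e u v * (e u w * η w v))
        (fun u v => ∑ w : V, e u v * (e v w * η u w)), hK1, hK2]
  -- recurrence termwise, over all pairs
  have key2 : ∀ u v : V, η u v
      = ((n / 2) * |x u - x v|
        + (1 / (2 * dr)) * ((∑ w : V, e u w * η w v) + (∑ w : V, e v w * η u w)))
        - (if u = v then
            (1 / (2 * dr)) * ((∑ w : V, e u w * η w u) + (∑ w : V, e u w * η u w))
           else 0) := by
    intro u v
    by_cases h : u = v
    · subst h
      simp [hη.1 u]
    · simp only [hn, hdr, hxdef, hedef, if_neg h]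
      rw [hη.2 u v h, nsum G u (fun w => η w v), nsum G v (fun w => η u w)]
      ring
  have hQ1 : ∑ u : V, ∑ v : V, ∑ w : V, e u w * η w v = dr * E := by
    rw [sum_swap23 fun u v w => e u w * η w v]
    rw [Finset.sum_congr rfl fun u _ => Finset.sum_congr rfl fun w _ =>
      (Finset.mul_sum Finset.univ (fun v => η w v) (e u w)).symm]
    rw [Finset.sum_comm]
    rw [Finset.sum_congr rfl fun w _ =>
      (Finset.sum_mul Finset.univ (fun u => e u w) (∑ v : V, η w v)).symm]
    rw [Finset.sum_congr rfl fun w _ => by rw [hdeg' w], ← Finset.mul_sum, hE]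
  have hQ2 : ∑ u : V, ∑ v : V, ∑ w : V, e v w * η u w = dr * E := by
    rw [Finset.sum_comm, sum_swap23 fun v u w => e v w * η u w]
    rw [Finset.sum_congr rfl fun v _ => Finset.sum_congr rfl fun w _ =>
      (Finset.mul_sum Finset.univ (fun u => η u w) (e v w)).symm]
    rw [Finset.sum_comm]
    rw [Finset.sum_congr rfl fun w _ =>
      (Finset.sum_mul Finset.univ (fun v => e v w) (∑ u : V, η u w)).symm]
    rw [Finset.sum_congr rfl fun w _ => by rw [hdeg' w], ← Finset.mul_sum, hE,
      Finset.sum_comm]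
  have hD1 : ∑ u : V, ∑ w : V, e u w * η w u = D := by
    rw [Finset.sum_comm, hD]
    refine Finset.sum_congr rfl fun w _ => Finset.sum_congr rfl fun u _ => ?_
    rw [he_symm u w]
  have hdiag : ∑ u : V, ∑ v : V, (if u = v then
      (1 / (2 * dr)) * ((∑ w : V, e u w * η w u) + (∑ w : V, e u w * η u w))
      else 0) = (1 / (2 * dr)) * (D + D) := by
    rw [Finset.sum_congr rfl fun u (_ : u ∈ Finset.univ) =>
      (Finset.sum_ite_eq Finset.univ u (fun _ =>
        (1 / (2 * dr)) * ((∑ w : V, e u w * η w u) + (∑ w : V, e u w * η u w))) )]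
    simp only [Finset.mem_univ, if_true]
    rw [← Finset.mul_sum, Finset.sum_add_distrib, hD1]
  have hEexp : E = ((n / 2) * B + (1 / (2 * dr)) * (dr * E + dr * E))
      - (1 / (2 * dr)) * (D + D) := by
    conv_lhs => rw [hE]
    rw [Finset.sum_congr rfl fun u _ => Finset.sum_congr rfl fun v _ => key2 u v]
    rw [show (∀ f g : V → V → ℝ, ∑ u : V, ∑ v : V, (f u v - g u v)
        = (∑ u : V, ∑ v : V, f u v) - ∑ u : V, ∑ v : V, g u v) from
      fun f g => by simp [Finset.sum_sub_distrib]]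
    rw [hdiag, split2, pull_const, pull_const, ← hB,
      split2 (fun u v => ∑ w : V, e u w * η w v) (fun u v => ∑ w : V, e v w * η u w),
      hQ1, hQ2]
  -- solve for D
  have hDval : D = ((n / 2) * B) * dr := by
    have h2dr : (1 / (2 * dr)) * (dr * E + dr * E) = E := by
      field_simp
      ring
    have h3 : (1 / (2 * dr)) * (D + D) = (n / 2) * B := by linarith [hEexp, h2dr]
    have h4 : D / dr = (n / 2) * B := by
      rw [← h3]; field_simp; ring
    exact (div_eq_iff hdne).mp h4
  -- solve for F
  have hFval : F = (D - (n / 2) * A) * dr := by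
    have h5 : (1 / (2 * dr)) * (F + F) = D - (n / 2) * A := by linarith [hDexp]
    have h6 : F / dr = D - (n / 2) * A := by
      rw [← h5]; field_simp; ring
    exact (div_eq_iff hdne).mp h6
  -- compute B
  have hxsum : ∑ v : V, x v = (k : ℝ) := by
    simp only [hxdef]
    rw [Finset.sum_boole]
    norm_cast
    rw [← hk]
    congr 1
    ext v
    simp
  have habs : ∀ u v : V, |x u - x v| = x u + x v - 2 * (x u * x v) := by
    intro u v
    simp only [hxdef]
    by_cases h1 : u ∈ S <;> by_cases h2 : v ∈ S <;> simp [h1, h2] <;> norm_num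
  have t1 : ∑ u : V, ∑ _v : V, x u = n * (k : ℝ) := by
    simp only [Finset.sum_const, Finset.card_univ, nsmul_eq_mul]
    rw [← Finset.mul_sum, hxsum]
  have t2 : ∑ _u : V, ∑ v : V, x v = n * (k : ℝ) := by
    rw [Finset.sum_congr rfl fun u _ => hxsum]
    simp [Finset.card_univ]
    exact Or.inl hn.symm
  have t3 : ∑ u : V, ∑ v : V, x u * x v = (k : ℝ) * (k : ℝ) := by
    rw [Finset.sum_congr rfl fun u _ => (Finset.mul_sum Finset.univ x (x u)).symm]
    rw [Finset.sum_congr rfl fun u (_ : u ∈ Finset.univ) => by rw [hxsum]]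
    rw [← Finset.sum_mul, hxsum]
  have hBval : B = 2 * (k : ℝ) * (n - (k : ℝ)) := by
    rw [hB, Finset.sum_congr rfl fun u _ => Finset.sum_congr rfl fun v _ => habs u v,
      split_sub (fun u v => x u + x v) (fun u v => 2 * (x u * x v)),
      split2 (fun u _ => x u) (fun _ v => x v), pull_const, t1, t2, t3]
    ring
  -- compute A
  have hAedge : (activeGraph G S).edgeFinset = G.edgeFinset.filter (fun e =>
      Sym2.lift ⟨fun u v => xor (decide (u ∈ S)) (decide (v ∈ S)),
        fun u v => Bool.xor_comm _ _⟩ e = true) := by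
    ext ed
    induction ed using Sym2.ind with
    | _ a b =>
      by_cases ha : a ∈ S <;> by_cases hb : b ∈ S <;>
        simp [SimpleGraph.mem_edgeFinset, SimpleGraph.mem_edgeSet, activeGraph_adj, ha, hb]
  have hcount : (activeGraph G S).edgeFinset.card = activeCount G S := by
    rw [hAedge]; rfl
  have h7 : ∑ u : V, (activeGraph G S).degree u = 2 * activeCount G S := by
    rw [SimpleGraph.sum_degrees_eq_twice_card_edges, hcount]
  have hterm : ∀ u v : V, e u v * |x u - x v|
      = if (activeGraph G S).Adj u v then (1:ℝ) else 0 := by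
    intro u v
    by_cases h : G.Adj u v <;> by_cases h1 : u ∈ S <;> by_cases h2 : v ∈ S <;>
      simp [hedef, hxdef, activeGraph_adj, h, h1, h2]
  have h8 : ∀ u : V, ∑ v : V, (if (activeGraph G S).Adj u v then (1:ℝ) else 0)
      = ((activeGraph G S).degree u : ℝ) := by
    intro u
    rw [Finset.sum_boole, ← SimpleGraph.neighborFinset_eq_filter, ← SimpleGraph.degree]
  have hAval : A = 2 * (activeCount G S : ℝ) := by
    rw [hA, Finset.sum_congr rfl fun u _ => Finset.sum_congr rfl fun v _ => hterm u v,
      Finset.sum_congr rfl fun u (_ : u ∈ Finset.univ) => h8 u, ← Nat.cast_sum, h7]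
    push_cast
    ring
  -- final algebra
  rw [hFval, hDval, hBval, hAval]
  field_simp
end

section
/- Let G be a d-regular finite simple undirected graph on n vertices (d ≥ 1), let S be a set of k vertices, and let η solve the McAvoy–Allen system for S. Then Σ_{(u,v) : u adjacent to v} η(u,v) = d·n·k·(n−k), where the sum ranges over all ordered pairs of adjacent vertices. -/
open Finset

variable {V : Type*}

theorem sum_eta_adjacent_pairs [Fintype V] [DecidableEq V]
    (G : SimpleGraph V) [DecidableRel G.Adj]
    (d k : ℕ) (hd : 1 ≤ d) (hreg : G.IsRegularOfDegree d)
    (S : Finset V) (hk : S.card = k) (η : V → V → ℝ) (hη : MASolves G d S η) :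
    ∑ p ∈ Finset.univ.filter (fun p : V × V => G.Adj p.1 p.2), η p.1 p.2
    = (d : ℝ) * (Fintype.card V : ℝ) * (k : ℝ) * ((Fintype.card V : ℝ) - (k : ℝ)) := by
  obtain ⟨h0, hrec⟩ := hη
  set n : ℝ := (Fintype.card V : ℝ) with hn
  set c : ℝ := 1 / (2 * (d : ℝ)) with hc
  have hd' : (d : ℝ) ≠ 0 := by
    exact Nat.cast_ne_zero.mpr (by omega)
  -- rewrite neighborFinset sums as indicator sums
  have hfilt : ∀ (g : V → V → ℝ), (∀ u, (∑ w ∈ G.neighborFinset u, g u w)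
      = ∑ w, if G.Adj u w then g u w else 0) := by
    intro g u
    rw [SimpleGraph.neighborFinset_eq_filter, Finset.sum_filter]
  -- T as double sum
  have hT : (∑ p ∈ Finset.univ.filter (fun p : V × V => G.Adj p.1 p.2), η p.1 p.2)
      = ∑ u, ∑ v ∈ G.neighborFinset u, η u v := by
    rw [Finset.sum_filter, Fintype.sum_prod_type]
    exact Finset.sum_congr rfl fun u _ => (hfilt (fun u w => η u w) u).symm
  rw [hT]
  set T : ℝ := ∑ u, ∑ v ∈ G.neighborFinset u, η u v with hTdef
  set A : ℝ := ∑ u, ∑ v, η u v with hA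
  -- regular-neighbor summation lemma
  have hnb : ∀ f : V → ℝ, (∑ u, ∑ w ∈ G.neighborFinset u, f w) = (d : ℝ) * ∑ w, f w := by
    intro f
    simp_rw [hfilt (fun _ w => f w)]
    rw [Finset.sum_comm]
    have h1 : ∀ w, (∑ u, if G.Adj u w then f w else 0) = (d : ℝ) * f w := by
      intro w
      rw [← Finset.sum_filter]
      rw [Finset.sum_const, nsmul_eq_mul]
      congr 1
      have : univ.filter (fun u => G.Adj u w) = G.neighborFinset w := by
        ext u; simp [SimpleGraph.adj_comm]
      rw [this]
      exact_mod_cast congrArg Nat.cast (hreg w)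
    simp_rw [h1]
    rw [← Finset.mul_sum]
  -- swapped T
  have hTswap : (∑ u, ∑ w ∈ G.neighborFinset u, η w u) = T := by
    rw [hTdef]
    simp_rw [hfilt (fun u w => η w u), hfilt (fun u w => η u w)]
    rw [Finset.sum_comm]
    refine Finset.sum_congr rfl fun u _ => Finset.sum_congr rfl fun w _ => ?_
    simp only [SimpleGraph.adj_comm G w u]
  -- indicator counting
  have hsum1 : (∑ v, if v ∈ S then (1:ℝ) else 0) = (k:ℝ) := by
    rw [Finset.sum_ite_mem, Finset.univ_inter, Finset.sum_const, hk, nsmul_eq_mul, mul_one]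
  have hsum0 : (∑ v, if v ∈ S then (0:ℝ) else 1) = n - (k:ℝ) := by
    have h2 : ∀ v, (if v ∈ S then (0:ℝ) else 1) = 1 - (if v ∈ S then 1 else 0) := by
      intro v; split_ifs <;> ring
    simp_rw [h2]
    rw [Finset.sum_sub_distrib, hsum1, Finset.sum_const, nsmul_eq_mul, mul_one, hn, Finset.card_univ]
  have hcount : (∑ u, ∑ v, |(if u ∈ S then (1:ℝ) else 0) - (if v ∈ S then (1:ℝ) else 0)|)
      = 2 * (k:ℝ) * (n - k) := by
    have habs : ∀ u v : V, |(if u ∈ S then (1:ℝ) else 0) - (if v ∈ S then (1:ℝ) else 0)|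
        = if u ∈ S then (if v ∈ S then (0:ℝ) else 1) else (if v ∈ S then 1 else 0) := by
      intro u v; split_ifs <;> norm_num
    simp_rw [habs]
    have hrow : ∀ u : V, (∑ v, if u ∈ S then (if v ∈ S then (0:ℝ) else 1)
        else (if v ∈ S then 1 else 0)) = if u ∈ S then n - (k:ℝ) else (k:ℝ) := by
      intro u
      by_cases h : u ∈ S <;> simp only [h, if_true, if_false, hsum0, hsum1]
    simp_rw [hrow]
    have h3 : ∀ u : V, (if u ∈ S then n - (k:ℝ) else (k:ℝ))
        = (k:ℝ) + (if u ∈ S then (1:ℝ) else 0) * (n - 2*k) := by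
      intro u; split_ifs <;> ring
    simp_rw [h3]
    rw [Finset.sum_add_distrib, ← Finset.sum_mul, hsum1, Finset.sum_const, Finset.card_univ, nsmul_eq_mul, hn]
    ring
  -- key pointwise identity including the diagonal
  have hkey : ∀ u v : V, η u v = (n/2) *
        |(if u ∈ S then (1:ℝ) else 0) - (if v ∈ S then (1:ℝ) else 0)|
      + c * ((∑ w ∈ G.neighborFinset u, η w v) + (∑ w ∈ G.neighborFinset v, η u w))
      - (if u = v then c * ((∑ w ∈ G.neighborFinset u, η w v)
            + (∑ w ∈ G.neighborFinset v, η u w)) else 0) := by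
    intro u v
    by_cases h : u = v
    · subst h
      rw [h0 u]
      simp
    · rw [hrec u v h, if_neg h, sub_zero, hn, hc]
  -- the three double sums
  have hS1 : (∑ u, ∑ v, ∑ w ∈ G.neighborFinset u, η w v) = (d:ℝ) * A := by
    have : ∀ u, (∑ v, ∑ w ∈ G.neighborFinset u, η w v)
        = ∑ w ∈ G.neighborFinset u, ∑ v, η w v := fun u => Finset.sum_comm
    simp_rw [this]
    rw [hnb (fun w => ∑ v, η w v)]
  have hS2 : (∑ u, ∑ v, ∑ w ∈ G.neighborFinset v, η u w) = (d:ℝ) * A := by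
    rw [Finset.sum_comm]
    have : ∀ v, (∑ u, ∑ w ∈ G.neighborFinset v, η u w)
        = ∑ w ∈ G.neighborFinset v, ∑ u, η u w := fun v => Finset.sum_comm
    simp_rw [this]
    rw [hnb (fun w => ∑ u, η u w), hA, Finset.sum_comm]
  have hdiag : (∑ u, ∑ v, (if u = v then c * ((∑ w ∈ G.neighborFinset u, η w v)
      + (∑ w ∈ G.neighborFinset v, η u w)) else 0)) = c * (2 * T) := by
    have : ∀ u : V, (∑ v, (if u = v then c * ((∑ w ∈ G.neighborFinset u, η w v)
        + (∑ w ∈ G.neighborFinset v, η u w)) else 0))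
        = c * ((∑ w ∈ G.neighborFinset u, η w u) + (∑ w ∈ G.neighborFinset u, η u w)) := by
      intro u
      rw [Finset.sum_ite_eq, if_pos (Finset.mem_univ u)]
    simp_rw [this]
    rw [← Finset.mul_sum, Finset.sum_add_distrib, hTswap, ← hTdef]
    ring
  -- assemble
  have hmain : A = (n/2) * (2 * (k:ℝ) * (n - k)) + c * ((d:ℝ) * A + (d:ℝ) * A) - c * (2 * T) := by
    calc A = ∑ u, ∑ v, ((n/2) *
        |(if u ∈ S then (1:ℝ) else 0) - (if v ∈ S then (1:ℝ) else 0)|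
      + c * ((∑ w ∈ G.neighborFinset u, η w v) + (∑ w ∈ G.neighborFinset v, η u w))
      - (if u = v then c * ((∑ w ∈ G.neighborFinset u, η w v)
            + (∑ w ∈ G.neighborFinset v, η u w)) else 0)) := by
          rw [hA]
          exact Finset.sum_congr rfl fun u _ => Finset.sum_congr rfl fun v _ => hkey u v
    _ = (n/2) * (∑ u, ∑ v, |(if u ∈ S then (1:ℝ) else 0) - (if v ∈ S then (1:ℝ) else 0)|)
        + c * ((∑ u, ∑ v, ∑ w ∈ G.neighborFinset u, η w v)
            + (∑ u, ∑ v, ∑ w ∈ G.neighborFinset v, η u w))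
        - (∑ u, ∑ v, (if u = v then c * ((∑ w ∈ G.neighborFinset u, η w v)
            + (∑ w ∈ G.neighborFinset v, η u w)) else 0)) := by
          simp only [Finset.sum_sub_distrib, Finset.sum_add_distrib]
          simp_rw [← Finset.mul_sum]
          simp_rw [Finset.sum_add_distrib]
    _ = (n/2) * (2 * (k:ℝ) * (n - k)) + c * ((d:ℝ) * A + (d:ℝ) * A) - c * (2 * T) := by
          rw [hcount, hS1, hS2, hdiag]
  -- finish by algebra
  have hcA : c * ((d:ℝ) * A + (d:ℝ) * A) = A := by
    rw [hc]; field_simp; ring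
  rw [hcA, hc] at hmain
  have hT' : T = (d:ℝ) * n * k * (n - k) := by
    field_simp at hmain
    nlinarith [hmain]
  exact hT'
end

section
/- Let G be a d-regular finite simple undirected graph on n vertices (d ≥ 1), let S be a set of k vertices, and let η solve the McAvoy–Allen system for S. Then Σ_{u,v ∈ V} |N(u) ∩ N(v)| · η(u,v) = d²·n·k·(n−k) − d·n·a(S), where a(S) is the number of active edges induced by S. -/
open Finset

variable {V : Type*}

/-!
Write `E = ∑_{u ~ v} η(u,v)` and `T` for the left-hand side. Summing the system over the ordered
adjacent pairs gives `E = n·a(S) + T/d`, since `∑_{u ~ v} ∑_{w ~ u} η(w,v)` counts each pair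
`(w,v)` once per common neighbour of `w` and `v`. Summing it instead over all ordered pairs
`u ≠ v`, regularity turns the neighbour sums back into `∑ η`, up to the missing diagonal terms,
which add up to `E/d`; hence `E = d·n·k(n-k)`, and `T = d·E - d·n·a(S)`.
-/

theorem abs_ite_sub_ite (p q : Prop) [Decidable p] [Decidable q] :
    |(if p then (1 : ℝ) else 0) - (if q then 1 else 0)| = if (p ↔ q) then 0 else 1 := by
  by_cases p <;> by_cases q <;> simp [*]

theorem Finset.sum_sum_abs_ite_sub [Fintype V] [DecidableEq V] (S : Finset V) :
    ∑ u : V, ∑ v : V, |(if u ∈ S then (1 : ℝ) else 0) - (if v ∈ S then 1 else 0)|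
      = 2 * #S * (Fintype.card V - #S) := by
  have hcompl : (#{v | v ∉ S} : ℝ) = Fintype.card V - #S := by
    rw [filter_notMem_eq_sdiff, ← compl_eq_univ_sdiff, card_compl, Nat.cast_sub (card_le_univ S)]
  have hrow (u : V) : ∑ v : V, |(if u ∈ S then (1 : ℝ) else 0) - (if v ∈ S then 1 else 0)|
      = if u ∈ S then (Fintype.card V - #S : ℝ) else #S := by
    simp only [abs_ite_sub_ite]
    by_cases hu : u ∈ S <;> simp [hu, sum_ite, hcompl]
  simp [hrow, sum_ite, hcompl]
  ring

namespace SimpleGraph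

section ActiveGraph

variable (G : SimpleGraph V) (S : Finset V)

def activeGraph : SimpleGraph V where
  Adj u v := G.Adj u v ∧ ¬(u ∈ S ↔ v ∈ S)
  symm := ⟨fun _ _ h => ⟨h.1.symm, fun h' => h.2 h'.symm⟩⟩
  loopless := ⟨fun u h => G.loopless.irrefl u h.1⟩

variable {G S} in
@[simp]
theorem activeGraph_adj {u v : V} :
    (G.activeGraph S).Adj u v ↔ G.Adj u v ∧ ¬(u ∈ S ↔ v ∈ S) :=
  Iff.rfl

variable [DecidableEq V] [DecidableRel G.Adj]

instance : DecidableRel (G.activeGraph S).Adj :=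
  fun u v => inferInstanceAs (Decidable (G.Adj u v ∧ ¬(u ∈ S ↔ v ∈ S)))

theorem activeCount_eq_card_edgeFinset [Fintype V] :
    activeCount G S = #(G.activeGraph S).edgeFinset := by
  refine congrArg card (ext fun e => ?_)
  induction e using Sym2.ind with
  | _ u v =>
    by_cases hu : u ∈ S <;> by_cases hv : v ∈ S <;> simp [hu, hv]

end ActiveGraph

variable [Fintype V] (G : SimpleGraph V) [DecidableRel G.Adj]

theorem sum_sum_neighborFinset_comm {M : Type*} [AddCommMonoid M] (f : V → V → M) :
    ∑ u, ∑ w ∈ G.neighborFinset u, f u w = ∑ w, ∑ u ∈ G.neighborFinset w, f u w :=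
  sum_comm' fun _ _ => by simp [adj_comm]

theorem sum_sum_card_inter_neighborFinset_mul [DecidableEq V] {R : Type*} [NonAssocSemiring R]
    (f : V → V → R) :
    ∑ u, ∑ v, (#(G.neighborFinset u ∩ G.neighborFinset v) : R) * f u v
      = ∑ w, ∑ u ∈ G.neighborFinset w, ∑ v ∈ G.neighborFinset w, f u v := by
  have hcomm (u : V) : ∑ v, ∑ _w ∈ G.neighborFinset u ∩ G.neighborFinset v, f u v
      = ∑ w ∈ G.neighborFinset u, ∑ v ∈ G.neighborFinset w, f u v :=
    sum_comm' fun _ _ => by simp [adj_comm, and_comm]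
  simp only [← nsmul_eq_mul, ← sum_const, hcomm]
  exact G.sum_sum_neighborFinset_comm fun u w => ∑ v ∈ G.neighborFinset w, f u v

variable {G} in
theorem IsRegularOfDegree.sum_sum_neighborFinset {d : ℕ} (hreg : G.IsRegularOfDegree d)
    {R : Type*} [NonAssocSemiring R] (f : V → R) :
    ∑ u, ∑ w ∈ G.neighborFinset u, f w = d * ∑ w, f w := by
  rw [G.sum_sum_neighborFinset_comm fun _ w => f w, mul_sum]
  simp [hreg _]

theorem sum_sum_neighborFinset_abs_ite_sub [DecidableEq V] (S : Finset V) :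
    ∑ u, ∑ v ∈ G.neighborFinset u,
        |(if u ∈ S then (1 : ℝ) else 0) - (if v ∈ S then 1 else 0)|
      = 2 * activeCount G S := by
  have hrow (u : V) : ∑ v ∈ G.neighborFinset u,
      |(if u ∈ S then (1 : ℝ) else 0) - (if v ∈ S then 1 else 0)|
        = (G.activeGraph S).degree u := by
    have hnbr : (G.activeGraph S).neighborFinset u
        = {v ∈ G.neighborFinset u | ¬(u ∈ S ↔ v ∈ S)} := by
      ext v; simp
    simp only [abs_ite_sub_ite, sum_ite, sum_const_zero, sum_const, zero_add, nsmul_one,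
      ← card_neighborFinset_eq_degree, hnbr]
  simp only [hrow]
  rw [activeCount_eq_card_edgeFinset]
  exact_mod_cast sum_degrees_eq_twice_card_edges _

end SimpleGraph

section McAvoyAllen

variable [Fintype V] [DecidableEq V] (G : SimpleGraph V) [DecidableRel G.Adj]
  (d : ℕ) (S : Finset V) (η : V → V → ℝ)

noncomputable def maRhs (u v : V) : ℝ :=
  ((Fintype.card V : ℝ) / 2) *
      |(if u ∈ S then (1 : ℝ) else 0) - (if v ∈ S then (1 : ℝ) else 0)|
    + (1 / (2 * (d : ℝ))) *
      ((∑ w ∈ G.neighborFinset u, η w v) + (∑ w ∈ G.neighborFinset v, η u w))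

theorem sum_maRhs_self :
    ∑ u, maRhs G d S η u u = (∑ u, ∑ v ∈ G.neighborFinset u, η u v) / d := by
  simp only [maRhs, sub_self, abs_zero, mul_zero, zero_add, ← mul_sum, sum_add_distrib,
    G.sum_sum_neighborFinset_comm fun u w => η w u]
  ring

theorem sum_sum_neighborFinset_maRhs :
    ∑ u, ∑ v ∈ G.neighborFinset u, maRhs G d S η u v
      = Fintype.card V * activeCount G S
        + (∑ u, ∑ v, (#(G.neighborFinset u ∩ G.neighborFinset v) : ℝ) * η u v) / d := by
  have hleft : ∑ u, ∑ v ∈ G.neighborFinset u, ∑ w ∈ G.neighborFinset u, η w v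
      = ∑ u, ∑ v, (#(G.neighborFinset u ∩ G.neighborFinset v) : ℝ) * η u v := by
    rw [G.sum_sum_card_inter_neighborFinset_mul]
    exact sum_congr rfl fun u _ => sum_comm
  have hright : ∑ u, ∑ v ∈ G.neighborFinset u, ∑ w ∈ G.neighborFinset v, η u w
      = ∑ u, ∑ v, (#(G.neighborFinset u ∩ G.neighborFinset v) : ℝ) * η u v := by
    rw [G.sum_sum_card_inter_neighborFinset_mul,
      G.sum_sum_neighborFinset_comm fun u v => ∑ w ∈ G.neighborFinset v, η u w]
  simp only [maRhs, sum_add_distrib, ← mul_sum, G.sum_sum_neighborFinset_abs_ite_sub, hleft,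
    hright]
  ring

variable {G d S η}

theorem SimpleGraph.IsRegularOfDegree.sum_sum_maRhs (hreg : G.IsRegularOfDegree d) (hd : d ≠ 0) :
    ∑ u, ∑ v, maRhs G d S η u v
      = Fintype.card V * #S * (Fintype.card V - #S) + ∑ u, ∑ v, η u v := by
  have hleft : ∑ u, ∑ v, ∑ w ∈ G.neighborFinset u, η w v = d * ∑ u, ∑ v, η u v := by
    simp only [sum_comm (s := univ) (t := G.neighborFinset _)]
    exact hreg.sum_sum_neighborFinset fun w => ∑ v, η w v
  have hright : ∑ u, ∑ v, ∑ w ∈ G.neighborFinset v, η u w = d * ∑ u, ∑ v, η u v := by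
    simp only [hreg.sum_sum_neighborFinset, mul_sum]
  simp only [maRhs, sum_add_distrib, ← mul_sum, sum_sum_abs_ite_sub, hleft, hright]
  field_simp
  ring

theorem MASolves.eq_maRhs (hη : MASolves G d S η) {u v : V} (huv : u ≠ v) :
    η u v = maRhs G d S η u v :=
  hη.2 u v huv

theorem MASolves.sum_eq_sum_maRhs_sub (hη : MASolves G d S η) (u : V) :
    ∑ v, η u v = ∑ v, maRhs G d S η u v - maRhs G d S η u u := by
  rw [← sum_erase univ (hη.1 u), ← sum_erase_eq_sub (mem_univ u)]
  exact sum_congr rfl fun v hv => hη.eq_maRhs (ne_of_mem_erase hv).symm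

theorem MASolves.sum_sum_neighborFinset (hη : MASolves G d S η) :
    ∑ u, ∑ v ∈ G.neighborFinset u, η u v
      = Fintype.card V * activeCount G S
        + (∑ u, ∑ v, (#(G.neighborFinset u ∩ G.neighborFinset v) : ℝ) * η u v) / d := by
  rw [← sum_sum_neighborFinset_maRhs]
  exact sum_congr rfl fun u _ => sum_congr rfl fun v hv =>
    hη.eq_maRhs (G.ne_of_adj ((G.mem_neighborFinset u v).1 hv))

theorem MASolves.sum_sum_neighborFinset_of_isRegularOfDegree (hη : MASolves G d S η)
    (hreg : G.IsRegularOfDegree d) (hd : d ≠ 0) :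
    ∑ u, ∑ v ∈ G.neighborFinset u, η u v
      = d * Fintype.card V * #S * (Fintype.card V - #S) := by
  have hsum : ∑ u, ∑ v, η u v
      = Fintype.card V * #S * (Fintype.card V - #S) + ∑ u, ∑ v, η u v
        - (∑ u, ∑ v ∈ G.neighborFinset u, η u v) / d := by
    rw [← hreg.sum_sum_maRhs hd, ← sum_maRhs_self, ← sum_sub_distrib]
    exact sum_congr rfl fun u _ => hη.sum_eq_sum_maRhs_sub u
  have hd' : (d : ℝ) ≠ 0 := Nat.cast_ne_zero.2 hd
  field_simp at hsum
  linear_combination hsum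

end McAvoyAllen

theorem sum_common_neighbors_eta [Fintype V] [DecidableEq V]
    (G : SimpleGraph V) [DecidableRel G.Adj]
    (d k : ℕ) (hd : 1 ≤ d) (hreg : G.IsRegularOfDegree d)
    (S : Finset V) (hk : S.card = k) (η : V → V → ℝ) (hη : MASolves G d S η) :
    ∑ u : V, ∑ v : V, ((G.neighborFinset u ∩ G.neighborFinset v).card : ℝ) * η u v
    = (d : ℝ) ^ 2 * (Fintype.card V : ℝ) * (k : ℝ) * ((Fintype.card V : ℝ) - (k : ℝ))
      - (d : ℝ) * (Fintype.card V : ℝ) * (activeCount G S : ℝ) := by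
  have hd' : (d : ℝ) ≠ 0 := Nat.cast_ne_zero.2 (by omega)
  have hE := hη.sum_sum_neighborFinset_of_isRegularOfDegree hreg (by omega)
  rw [hη.sum_sum_neighborFinset] at hE
  subst hk
  field_simp at hE
  linear_combination hE
end

section
/- Let G be a connected d-regular finite simple undirected graph on n vertices (d ≥ 1), and let S be a set of vertices. Then the McAvoy–Allen system for S has at most one solution: if η and η′ both solve the system, then η = η′. -/
open Finset

variable {V : Type*}

/-- Maximum principle: a function vanishing on the diagonal and satisfying the
homogeneous averaging equation is nonpositive. -/
lemma ma_aux [Fintype V] [DecidableEq V]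
    (G : SimpleGraph V) [DecidableRel G.Adj]
    (d : ℕ) (hd : 1 ≤ d) (hreg : G.IsRegularOfDegree d) (hconn : G.Connected)
    (δ : V → V → ℝ)
    (h0 : ∀ u, δ u u = 0)
    (heq : ∀ u v, u ≠ v → δ u v =
      (1 / (2 * (d : ℝ))) *
        ((∑ w ∈ G.neighborFinset u, δ w v) + (∑ w ∈ G.neighborFinset v, δ u w))) :
    ∀ u v, δ u v ≤ 0 := by
  have hV : Nonempty V := hconn.nonempty
  have hne : (Finset.univ ×ˢ Finset.univ : Finset (V × V)).Nonempty := by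
    simp [Finset.univ_nonempty]
  set M := (Finset.univ ×ˢ Finset.univ : Finset (V × V)).sup' hne (fun p => δ p.1 p.2)
    with hMdef
  have hle : ∀ u v, δ u v ≤ M := fun u v =>
    Finset.le_sup' (f := fun p : V × V => δ p.1 p.2) (by simp : ((u, v) : V × V) ∈ _)
  obtain ⟨⟨u₀, v₀⟩, -, hmax⟩ :=
    Finset.exists_mem_eq_sup' hne (fun p : V × V => δ p.1 p.2)
  have hdpos : (0 : ℝ) < d := by exact_mod_cast hd
  have key : ∀ u v, G.Walk u v → δ u v = M → M = 0 := by
    intro u v p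
    induction p with
    | nil =>
      intro h
      rw [h0] at h
      exact h.symm
    | @cons u w v ha p ih =>
      intro h
      by_cases hu : u = v
      · subst hu
        rw [h0] at h
        exact h.symm
      · have hcard_u : (G.neighborFinset u).card = d := hreg u
        have hcard_v : (G.neighborFinset v).card = d := hreg v
        have hS1 : (∑ x ∈ G.neighborFinset u, δ x v) ≤ d * M := by
          calc (∑ x ∈ G.neighborFinset u, δ x v)
              ≤ ∑ _x ∈ G.neighborFinset u, M := Finset.sum_le_sum fun x _ => hle x v
            _ = d * M := by rw [Finset.sum_const, hcard_u, nsmul_eq_mul]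
        have hS2 : (∑ x ∈ G.neighborFinset v, δ u x) ≤ d * M := by
          calc (∑ x ∈ G.neighborFinset v, δ u x)
              ≤ ∑ _x ∈ G.neighborFinset v, M := Finset.sum_le_sum fun x _ => hle u x
            _ = d * M := by rw [Finset.sum_const, hcard_v, nsmul_eq_mul]
        have hEq := heq u v hu
        rw [h] at hEq
        have hsum : (∑ x ∈ G.neighborFinset u, δ x v)
            + (∑ x ∈ G.neighborFinset v, δ u x) = 2 * d * M := by
          have h2d : (2 * (d : ℝ)) ≠ 0 := by positivity
          field_simp at hEq
          linarith
        have hS1eq : (∑ x ∈ G.neighborFinset u, δ x v) = d * M := by linarith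
        have hwv : δ w v = M := by
          by_contra hne'
          have hlt : δ w v < M := lt_of_le_of_ne (hle w v) hne'
          have : (∑ x ∈ G.neighborFinset u, δ x v)
              < ∑ _x ∈ G.neighborFinset u, M :=
            Finset.sum_lt_sum (fun x _ => hle x v)
              ⟨w, by simp [SimpleGraph.mem_neighborFinset, ha], hlt⟩
          rw [Finset.sum_const, hcard_u, nsmul_eq_mul] at this
          linarith
        exact ih hwv
  obtain ⟨p⟩ := hconn u₀ v₀
  have hM0 : M = 0 := key u₀ v₀ p hmax.symm
  intro u v
  have := hle u v
  linarith

theorem mcavoy_allen_unique_solution [Fintype V] [DecidableEq V]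
    (G : SimpleGraph V) [DecidableRel G.Adj]
    (d : ℕ) (hd : 1 ≤ d) (hreg : G.IsRegularOfDegree d) (hconn : G.Connected)
    (S : Finset V) (η η' : V → V → ℝ)
    (hη : MASolves G d S η) (hη' : MASolves G d S η') :
    η = η' := by
  have main : ∀ (a b : V → V → ℝ), MASolves G d S a → MASolves G d S b →
      ∀ u v, a u v - b u v ≤ 0 := by
    intro a b ha hb
    apply ma_aux G d hd hreg hconn
    · intro u
      rw [ha.1 u, hb.1 u]; ring
    · intro u v huv
      have h1 := ha.2 u v huv
      have h2 := hb.2 u v huv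
      rw [Finset.sum_sub_distrib, Finset.sum_sub_distrib, h1, h2]
      ring
  funext u v
  have h1 := main η η' hη hη' u v
  have h2 := main η' η hη' hη u v
  linarith
end
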